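/- arXiv:2205.15679 — 3 statements merged into one kernel-verified Lean document; each statement's English description precedes it below -/
import Mathlib

section
/- For every m ≥ 2 and every ranking pattern σ over [m] (strict or weak), there exists a voting situation N on m candidates that is q-concordant with σ. -/
open Finset

/-- Number of votes obtained by candidate `i` in an election with candidate set `A`,
under the voting situation `N` (number of voters per preference permutation). -/
def votes (m : ℕ) (N : Equiv.Perm (Fin m) → ℕ) (A : Finset (Fin m)) (i : Fin m) : ℕ :=
  ∑ π : Equiv.Perm (Fin m),
    N π * (if ∀ j ∈ A, j ≠ i → π.symm i < π.symm j then 1 else 0)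

/-- `σ` is a ranking function on the finite set `A`:
each value equals one plus the number of strictly preceding elements of `A`. -/
def IsRankingFunction (m : ℕ) (A : Finset (Fin m)) (σ : Fin m → ℕ) : Prop :=
  ∀ i ∈ A, σ i = 1 + (A.filter (fun j => σ j < σ i)).card

/-- A ranking pattern over `[m]`: a ranking function for each subset of size at least 2. -/
def IsRankingPattern (m : ℕ) (σ : Finset (Fin m) → Fin m → ℕ) : Prop :=
  ∀ A : Finset (Fin m), 2 ≤ A.card → IsRankingFunction m A (σ A)

/-- A ranking pattern is strict when each of its ranking functions is injective on its set. -/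
def IsStrictRankingPattern (m : ℕ) (σ : Finset (Fin m) → Fin m → ℕ) : Prop :=
  IsRankingPattern m σ ∧ ∀ A : Finset (Fin m), 2 ≤ A.card → Set.InjOn (σ A) ↑A

/-- A voting situation `N` is q-concordant with the ranking pattern `σ`. -/
def QConcordant (m : ℕ) (N : Equiv.Perm (Fin m) → ℕ)
    (σ : Finset (Fin m) → Fin m → ℕ) : Prop :=
  ∀ A : Finset (Fin m), 2 ≤ A.card → ∀ i ∈ A, ∀ j ∈ A, i ≠ j →
    (σ A i < σ A j ↔ votes m N A j < votes m N A i) ∧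
    (σ A i = σ A j ↔ votes m N A i = votes m N A j)

/-!
Votes are linear in the voting situation, so it suffices to realise the differences
`σ A j - σ A i` by a signed rational situation: clearing denominators and then adding the same
number of voters for every preference order only multiplies them by a positive factor, because
each candidate of `A` is first among `A` in equally many orders.

The building blocks are the orders of `block C k`, which list the candidates outside `C` first
and then `k`. On a set `A ⊆ C` such a voter votes for `k` when `k ∈ A` and symmetrically in
`A` otherwise; on a set `A ⊄ C` its vote does not depend on `k ∈ C`. Hence a zero-sum
combination of the blocks `block C k`, `k ∈ C`, shifts the differences inside every `A ⊆ C`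
and leaves all other sets alone, and the coefficients are found by downward recursion on `C`.
-/

namespace Voting

open Equiv

section SupersetCoeff

variable {α K : Type*} [Fintype α] [DecidableEq α] [Field K]

noncomputable def supersetCoeff (f : Finset α → α → K) : Finset α → α → K
  | A => fun x =>
    let w : α → K := fun y =>
      f A y - ∑ C ∈ (univ.filter (A ⊂ ·)).attach, supersetCoeff f C.1 y
    w x - (∑ y ∈ A, w y) / #A
termination_by A => #Aᶜ
decreasing_by exact card_lt_card (compl_ssubset_compl.mpr (mem_filter.mp C.2).2)

theorem supersetCoeff_eq (f : Finset α → α → K) (A : Finset α) (x : α) :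
    supersetCoeff f A x =
      (f A x - ∑ C ∈ univ.filter (A ⊂ ·), supersetCoeff f C x) -
        (∑ y ∈ A, (f A y - ∑ C ∈ univ.filter (A ⊂ ·), supersetCoeff f C y)) / #A := by
  have h (y : α) : ∑ C ∈ (univ.filter (A ⊂ ·)).attach, supersetCoeff f C.1 y =
      ∑ C ∈ univ.filter (A ⊂ ·), supersetCoeff f C y :=
    sum_attach _ (fun C => supersetCoeff f C y)
  rw [supersetCoeff]
  simp only [h]

theorem sum_supersetCoeff [CharZero K] (f : Finset α → α → K) (C : Finset α) :
    ∑ k ∈ C, supersetCoeff f C k = 0 := by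
  rcases C.eq_empty_or_nonempty with rfl | hC
  · simp
  have hcard : (#C : K) ≠ 0 := by exact_mod_cast hC.card_pos.ne'
  simp only [supersetCoeff_eq f C, sum_sub_distrib (s := C), sum_const, nsmul_eq_mul]
  field_simp
  ring

theorem sum_superset_supersetCoeff_sub (f : Finset α → α → K) (A : Finset α) (i j : α) :
    ∑ C ∈ univ.filter (A ⊆ ·), (supersetCoeff f C i - supersetCoeff f C j) =
      f A i - f A j := by
  have hsplit : univ.filter (A ⊆ ·) = insert A (univ.filter (A ⊂ ·)) := by
    ext C
    simp only [mem_filter, mem_univ, true_and, mem_insert]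
    exact ⟨fun h => h.eq_or_ssubset.imp_left Eq.symm,
      fun h => h.elim (fun h => h ▸ subset_rfl) subset_of_ssubset⟩
  rw [hsplit, sum_insert (by simp), sum_sub_distrib, supersetCoeff_eq f A i,
    supersetCoeff_eq f A j]
  ring

end SupersetCoeff

theorem swap_mem_iff {α : Type*} [DecidableEq α] {C : Finset α} {a b : α} (h : a ∈ C ↔ b ∈ C)
    (x : α) : swap a b x ∈ C ↔ x ∈ C := by
  rcases eq_or_ne x a with rfl | hxa
  · simp [h]
  rcases eq_or_ne x b with rfl | hxb
  · simp [h]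
  · rw [swap_apply_of_ne_of_ne hxa hxb]

section Blocks

variable {m : ℕ}

/-- `π.symm x` is the position of candidate `x` in the preference order `π`. -/
def RanksFirst (A : Finset (Fin m)) (i : Fin m) (π : Perm (Fin m)) : Prop :=
  ∀ j ∈ A, j ≠ i → π.symm i < π.symm j

instance (A : Finset (Fin m)) (i : Fin m) : DecidablePred (RanksFirst A i) :=
  fun _ => by unfold RanksFirst; infer_instance

def block (C : Finset (Fin m)) (k : Fin m) : Finset (Perm (Fin m)) :=
  univ.filter fun π => (∀ x ∉ C, ∀ y ∈ C, π.symm x < π.symm y) ∧ RanksFirst C k π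

def firstCount (A : Finset (Fin m)) (i : Fin m) : ℕ := #(univ.filter (RanksFirst A i))

def blockVotes (C : Finset (Fin m)) (k : Fin m) (A : Finset (Fin m)) (i : Fin m) : ℕ :=
  #((block C k).filter (RanksFirst A i))

theorem RanksFirst.eq {A : Finset (Fin m)} {i j : Fin m} {π : Perm (Fin m)}
    (hi : RanksFirst A i π) (hj : RanksFirst A j π) (hiA : i ∈ A) (hjA : j ∈ A) : i = j := by
  by_contra hij
  exact lt_asymm (hi j hjA (Ne.symm hij)) (hj i hiA hij)

theorem RanksFirst.mono {A C : Finset (Fin m)} {k : Fin m} {π : Perm (Fin m)}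
    (h : RanksFirst C k π) (hAC : A ⊆ C) : RanksFirst A k π :=
  fun j hj => h j (hAC hj)

theorem ranksFirst_mul_iff {s : Perm (Fin m)} {A : Finset (Fin m)}
    (hA : ∀ x, s x ∈ A ↔ x ∈ A) (i : Fin m) (π : Perm (Fin m)) :
    RanksFirst A (s i) (s * π) ↔ RanksFirst A i π := by
  simp only [RanksFirst, Perm.mul_def, symm_trans_apply, symm_apply_apply]
  refine ⟨fun h j hj hji => ?_, fun h j hj hji => ?_⟩
  · simpa using h (s j) ((hA j).mpr hj) (s.injective.ne hji)
  · exact h (s.symm j) (by rwa [← hA, apply_symm_apply]) (by rintro rfl; simp at hji)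

theorem mul_mem_block_iff {s : Perm (Fin m)} {C : Finset (Fin m)}
    (hC : ∀ x, s x ∈ C ↔ x ∈ C) (k : Fin m) (π : Perm (Fin m)) :
    s * π ∈ block C (s k) ↔ π ∈ block C k := by
  simp only [block, mem_filter, mem_univ, true_and, ranksFirst_mul_iff hC]
  refine and_congr_left fun _ => ⟨fun h x hx y hy => ?_, fun h x hx y hy => ?_⟩
  · simpa [Perm.mul_def, symm_trans_apply] using h (s x) (by rwa [hC]) (s y) (by rwa [hC])
  · simpa [Perm.mul_def, symm_trans_apply] using
      h (s.symm x) (by rwa [← hC, apply_symm_apply]) (s.symm y)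
        (by rwa [← hC, apply_symm_apply])

theorem card_block_perm {s : Perm (Fin m)} {C : Finset (Fin m)}
    (hC : ∀ x, s x ∈ C ↔ x ∈ C) (k : Fin m) : #(block C (s k)) = #(block C k) :=
  (card_equiv (Equiv.mulLeft s) fun π => (mul_mem_block_iff hC k π).symm).symm

theorem firstCount_perm {s : Perm (Fin m)} {A : Finset (Fin m)}
    (hA : ∀ x, s x ∈ A ↔ x ∈ A) (i : Fin m) : firstCount A (s i) = firstCount A i :=
  (card_equiv (Equiv.mulLeft s) fun π => by
    simp [ranksFirst_mul_iff hA]).symm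

theorem blockVotes_perm {s : Perm (Fin m)} {A C : Finset (Fin m)}
    (hC : ∀ x, s x ∈ C ↔ x ∈ C) (hA : ∀ x, s x ∈ A ↔ x ∈ A) (k i : Fin m) :
    blockVotes C (s k) A (s i) = blockVotes C k A i :=
  (card_equiv (Equiv.mulLeft s) fun π => by
    simp [mul_mem_block_iff hC, ranksFirst_mul_iff hA]).symm

theorem card_block_eq {C : Finset (Fin m)} {k k' : Fin m} (hk : k ∈ C) (hk' : k' ∈ C) :
    #(block C k) = #(block C k') := by
  simpa using (card_block_perm (swap_mem_iff (iff_of_true hk hk')) k).symm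

theorem firstCount_eq {A : Finset (Fin m)} {i j : Fin m} (hi : i ∈ A) (hj : j ∈ A) :
    firstCount A i = firstCount A j := by
  simpa using (firstCount_perm (swap_mem_iff (iff_of_true hi hj)) i).symm

theorem block_nonempty {C : Finset (Fin m)} {k : Fin m} (hk : k ∈ C) : (block C k).Nonempty := by
  let key : Fin m → ℕ := fun x => if x ∈ C then (if x = k then m else m + 1 + x) else x
  have hkey : Function.Injective key := by
    intro x y h
    simp only [key] at h
    split_ifs at h <;> grind
  let π := Tuple.sort key
  have hπ : StrictMono (key ∘ π) :=
    (Tuple.monotone_sort key).strictMono_of_injective (hkey.comp π.injective)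
  have hlt (x y : Fin m) : π.symm x < π.symm y ↔ key x < key y := by
    simpa using (hπ.lt_iff_lt (a := π.symm x) (b := π.symm y)).symm
  refine ⟨π, mem_filter.mpr ⟨mem_univ _, fun x hx y hy => ?_, fun y hy hyk => ?_⟩⟩
  · rw [hlt]
    simp only [key, if_neg hx, if_pos hy]
    split_ifs <;> omega
  · rw [hlt]
    simp only [key, hk, hy, hyk, if_true, if_false]
    omega

theorem blockVotes_of_mem {A C : Finset (Fin m)} {k i : Fin m} (hAC : A ⊆ C) (hk : k ∈ A)
    (hi : i ∈ A) : blockVotes C k A i = if i = k then #(block C k) else 0 := by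
  have hfirst {π} (hπ : π ∈ block C k) : RanksFirst A k π := ((mem_filter.mp hπ).2.2).mono hAC
  split_ifs with hik
  · subst hik
    rw [blockVotes, filter_true_of_mem fun π hπ => hfirst hπ]
  · refine card_eq_zero.mpr (filter_eq_empty_iff.mpr fun π hπ h => hik ?_)
    exact h.eq (hfirst hπ) hi hk

theorem blockVotes_eq_of_notMem {A C : Finset (Fin m)} {k i j : Fin m} (hAC : A ⊆ C)
    (hk : k ∉ A) (hi : i ∈ A) (hj : j ∈ A) : blockVotes C k A i = blockVotes C k A j := by
  have hswap := blockVotes_perm (swap_mem_iff (iff_of_true (hAC hi) (hAC hj)))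
    (swap_mem_iff (iff_of_true hi hj)) k i
  rwa [swap_apply_left, swap_apply_of_ne_of_ne (by grind) (by grind), eq_comm] at hswap

theorem ranksFirst_iff_of_mem_block {A C : Finset (Fin m)} {k i : Fin m}
    {π : Perm (Fin m)} (hπ : π ∈ block C k) (hAC : ¬A ⊆ C) :
    RanksFirst A i π ↔ i ∉ C ∧ RanksFirst (A \ C) i π := by
  have hfront := (mem_filter.mp hπ).2.1
  refine ⟨fun h => ⟨fun hiC => ?_, h.mono sdiff_subset⟩, fun ⟨hiC, h⟩ j hjA hji => ?_⟩
  · obtain ⟨j, hjA, hjC⟩ := not_subset.mp hAC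
    exact lt_asymm (h j hjA (by grind)) (hfront j hjC i hiC)
  · by_cases hjC : j ∈ C
    · exact hfront i hiC j hjC
    · exact h j (mem_sdiff.mpr ⟨hjA, hjC⟩) hji

theorem blockVotes_eq_of_not_subset {A C : Finset (Fin m)} {k k' i : Fin m} (hAC : ¬A ⊆ C)
    (hk : k ∈ C) (hk' : k' ∈ C) : blockVotes C k A i = blockVotes C k' A i := by
  have hred {l} :
      blockVotes C l A i = #((block C l).filter fun π => i ∉ C ∧ RanksFirst (A \ C) i π) :=
    congrArg card (filter_congr fun π hπ => ranksFirst_iff_of_mem_block hπ hAC)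
  rw [hred, hred]
  by_cases hiC : i ∈ C
  · simp [hiC]
  have hswap := blockVotes_perm (swap_mem_iff (iff_of_true hk hk'))
    (swap_mem_iff (C := A \ C) (by simp [hk, hk'])) k i
  rw [swap_apply_left, swap_apply_of_ne_of_ne (by grind) (by grind)] at hswap
  simpa [blockVotes, hiC] using hswap.symm

end Blocks

section SignedSituations

variable {m : ℕ} {K : Type*} [Field K]

def signedVotes (N : Perm (Fin m) → K) (A : Finset (Fin m)) (i : Fin m) : K :=
  ∑ π ∈ univ.filter (RanksFirst A i), N π

noncomputable def blockSituation (a : Finset (Fin m) → Fin m → K) (π : Perm (Fin m)) :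
    K :=
  ∑ C, ∑ k ∈ C, a C k / #(block C k) * if π ∈ block C k then 1 else 0

theorem signedVotes_blockSituation (a : Finset (Fin m) → Fin m → K) (A : Finset (Fin m))
    (i : Fin m) :
    signedVotes (blockSituation a) A i =
      ∑ C, ∑ k ∈ C, a C k / #(block C k) * blockVotes C k A i := by
  simp only [signedVotes, blockSituation]
  rw [sum_comm]
  refine sum_congr rfl fun C _ => ?_
  rw [sum_comm]
  refine sum_congr rfl fun k _ => ?_
  rw [← mul_sum, sum_boole, blockVotes, filter_filter]
  congr 3
  ext π
  simp [block, and_comm]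

theorem sum_blockVotes_sub_of_subset [CharZero K] (a : Finset (Fin m) → Fin m → K)
    {A C : Finset (Fin m)} {i j : Fin m} (hAC : A ⊆ C) (hi : i ∈ A) (hj : j ∈ A) :
    ∑ k ∈ C, a C k / #(block C k) * ((blockVotes C k A i : K) - blockVotes C k A j) =
      a C i - a C j := by
  have hterm : ∀ k ∈ C, a C k / #(block C k) * ((blockVotes C k A i : K) - blockVotes C k A j) =
      (if k = i then a C i else 0) - (if k = j then a C j else 0) := by
    intro k hk
    by_cases hkA : k ∈ A
    · have hcard : (#(block C k) : K) ≠ 0 := by exact_mod_cast (block_nonempty hk).card_pos.ne'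
      rw [blockVotes_of_mem hAC hkA hi, blockVotes_of_mem hAC hkA hj]
      split_ifs <;> subst_vars <;> simp_all
    · rw [blockVotes_eq_of_notMem hAC hkA hi hj, sub_self, mul_zero,
        if_neg (by grind), if_neg (by grind), sub_zero]
  rw [sum_congr rfl hterm, sum_sub_distrib, sum_ite_eq' C i, sum_ite_eq' C j,
    if_pos (hAC hi), if_pos (hAC hj)]

theorem sum_blockVotes_sub_of_not_subset (a : Finset (Fin m) → Fin m → K)
    {A C : Finset (Fin m)} (ha : ∑ k ∈ C, a C k = 0) (hAC : ¬A ⊆ C) (i j : Fin m) :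
    ∑ k ∈ C, a C k / #(block C k) * ((blockVotes C k A i : K) - blockVotes C k A j) = 0 := by
  rcases C.eq_empty_or_nonempty with rfl | ⟨k₀, hk₀⟩
  · simp
  have hterm : ∀ k ∈ C, a C k / #(block C k) * ((blockVotes C k A i : K) - blockVotes C k A j) =
      a C k * (((blockVotes C k₀ A i : K) - blockVotes C k₀ A j) / #(block C k₀)) := by
    intro k hk
    rw [card_block_eq hk hk₀, blockVotes_eq_of_not_subset hAC hk hk₀,
      blockVotes_eq_of_not_subset hAC hk hk₀]
    ring
  rw [sum_congr rfl hterm, ← sum_mul, ha, zero_mul]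

theorem signedVotes_blockSituation_sub [CharZero K] {a : Finset (Fin m) → Fin m → K}
    (ha : ∀ C, ∑ k ∈ C, a C k = 0) {A : Finset (Fin m)} {i j : Fin m} (hi : i ∈ A)
    (hj : j ∈ A) :
    signedVotes (blockSituation a) A i - signedVotes (blockSituation a) A j =
      ∑ C ∈ univ.filter (A ⊆ ·), (a C i - a C j) := by
  simp only [signedVotes_blockSituation, ← sum_sub_distrib, ← mul_sub, sum_filter]
  refine sum_congr rfl fun C _ => ?_
  split_ifs with hAC
  · exact sum_blockVotes_sub_of_subset a hAC hi hj
  · exact sum_blockVotes_sub_of_not_subset a (ha C) hAC i j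

end SignedSituations

section NaturalSituations

theorem exists_pos_nat_mul_eq_intCast {ι : Type*} [Fintype ι] (f : ι → ℚ) :
    ∃ d : ℕ, 0 < d ∧ ∃ z : ι → ℤ, ∀ x, (z x : ℚ) = d * f x := by
  refine ⟨∏ x, (f x).den, prod_pos fun x _ => (f x).pos, ?_⟩
  have (x : ι) : ∃ z : ℤ, (z : ℚ) = (∏ x, (f x).den : ℕ) * f x := by
    obtain ⟨t, ht⟩ := dvd_prod_of_mem (fun x => (f x).den) (mem_univ x)
    refine ⟨(f x).num * t, ?_⟩
    rw [ht]
    push_cast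
    rw [← Rat.den_mul_eq_num]
    ring
  choose z hz using this
  exact ⟨z, hz⟩

variable {m : ℕ}

theorem votes_eq_signedVotes (N : Perm (Fin m) → ℕ) (A : Finset (Fin m)) (i : Fin m) :
    (votes m N A i : ℚ) = signedVotes (fun π => (N π : ℚ)) A i := by
  simp [votes, signedVotes, sum_filter, RanksFirst]

theorem exists_votes_sub_eq_mul (N : Perm (Fin m) → ℚ) :
    ∃ n : Perm (Fin m) → ℕ, ∃ d : ℚ, 0 < d ∧ ∀ A : Finset (Fin m), ∀ i ∈ A, ∀ j ∈ A,
      (votes m n A i : ℚ) - votes m n A j = d * (signedVotes N A i - signedVotes N A j) := by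
  obtain ⟨d, hd, z, hz⟩ := exists_pos_nat_mul_eq_intCast N
  set M := ∑ π, |z π|
  have hcast (π : Perm (Fin m)) : ((z π + M).toNat : ℚ) = d * N π + M := by
    have hle : |z π| ≤ M := single_le_sum (fun π _ => abs_nonneg (z π)) (mem_univ π)
    rw [← Int.cast_natCast, Int.toNat_of_nonneg (by linarith [neg_abs_le (z π)])]
    push_cast
    rw [hz]
  refine ⟨fun π => (z π + M).toNat, d, by exact_mod_cast hd, fun A i hi j hj => ?_⟩
  have hvotes (l : Fin m) : (votes m (fun π => (z π + M).toNat) A l : ℚ) =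
      d * signedVotes N A l + M * firstCount A l := by
    rw [votes_eq_signedVotes]
    simp only [signedVotes, hcast, sum_add_distrib, mul_sum, sum_const, nsmul_eq_mul,
      firstCount]
    ring
  rw [hvotes, hvotes, firstCount_eq hi hj]
  ring

end NaturalSituations

theorem lt_iff_lt_and_eq_iff_eq_of_sub_eq_mul {a b c e : ℕ} {d : ℚ} (hd : 0 < d)
    (h : (a : ℚ) - b = d * (e - c)) : (c < e ↔ b < a) ∧ (c = e ↔ a = b) := by
  constructor
  · rw [← Nat.cast_lt (α := ℚ), ← Nat.cast_lt (α := ℚ), ← sub_pos, ← sub_pos (a := (a : ℚ)), h,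
      mul_pos_iff_of_pos_left hd]
  · rw [← Nat.cast_inj (R := ℚ), ← Nat.cast_inj (R := ℚ), ← sub_eq_zero (a := (a : ℚ)), h,
      mul_eq_zero, or_iff_right hd.ne', sub_eq_zero, eq_comm]

end Voting

theorem stmt7_general (m : ℕ) (σ : Finset (Fin m) → Fin m → ℕ) :
    ∃ N : Equiv.Perm (Fin m) → ℕ, QConcordant m N σ := by
  obtain ⟨n, d, hd, hn⟩ := Voting.exists_votes_sub_eq_mul
    (Voting.blockSituation (Voting.supersetCoeff fun A x => -(σ A x : ℚ)))
  refine ⟨n, fun A _ i hi j hj _ => Voting.lt_iff_lt_and_eq_iff_eq_of_sub_eq_mul hd ?_⟩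
  rw [hn A i hi j hj, Voting.signedVotes_blockSituation_sub (Voting.sum_supersetCoeff _) hi hj,
    Voting.sum_superset_supersetCoeff_sub]
  ring

theorem stmt7 (m : ℕ) (hm : 2 ≤ m) (σ : Finset (Fin m) → Fin m → ℕ)
    (hσ : IsRankingPattern m σ) :
    ∃ N : Equiv.Perm (Fin m) → ℕ, QConcordant m N σ :=
  stmt7_general m σ
end

section
/- Let σ be a ranking pattern over [m], A ⊆ [m] with |A| ≥ 2, and suppose σ(A,i) = 1 for all i ∈ A (all candidates of A tie in first place). Then for any voting situation N q-concordant with σ, the total number of voters n(N) = Σ_π N(π) is a multiple of |A|. Consequently, if θ is a number of voters such that every ranking pattern over [m] admits a q-concordant voting situation with exactly θ voters, then θ is a multiple of lcm{2,3,...,m}. -/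
open Finset

lemma filter_min_card (m : ℕ) (A : Finset (Fin m)) (hA : A.Nonempty)
    (π : Equiv.Perm (Fin m)) :
    (A.filter (fun i => ∀ j ∈ A, j ≠ i → π.symm i < π.symm j)).card = 1 := by
  obtain ⟨i₀, hi₀, hmin⟩ := A.exists_min_image (fun i => π.symm i) hA
  have : A.filter (fun i => ∀ j ∈ A, j ≠ i → π.symm i < π.symm j) = {i₀} := by
    ext i
    simp only [Finset.mem_filter, Finset.mem_singleton]
    constructor
    · rintro ⟨hiA, hpred⟩
      by_contra hne
      have h1 := hpred i₀ hi₀ (fun h => hne h.symm)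
      exact absurd (hmin i hiA) (not_le.mpr h1)
    · rintro rfl
      refine ⟨hi₀, fun j hj hne => lt_of_le_of_ne (hmin j hj) ?_⟩
      intro h
      exact hne (π.symm.injective h.symm)
  rw [this, Finset.card_singleton]

lemma sum_votes (m : ℕ) (N : Equiv.Perm (Fin m) → ℕ) (A : Finset (Fin m))
    (hA : A.Nonempty) :
    ∑ i ∈ A, votes m N A i = ∑ π : Equiv.Perm (Fin m), N π := by
  unfold votes
  rw [Finset.sum_comm]
  refine Finset.sum_congr rfl fun π _ => ?_
  rw [← Finset.mul_sum, Finset.sum_boole]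
  simp [filter_min_card m A hA π]

theorem stmt8 (m : ℕ) (hm : 2 ≤ m) :
    (∀ σ : Finset (Fin m) → Fin m → ℕ, IsRankingPattern m σ →
      ∀ A : Finset (Fin m), 2 ≤ A.card → (∀ i ∈ A, σ A i = 1) →
      ∀ N : Equiv.Perm (Fin m) → ℕ, QConcordant m N σ →
        A.card ∣ ∑ π : Equiv.Perm (Fin m), N π) ∧
    (∀ θ : ℕ,
      (∀ σ : Finset (Fin m) → Fin m → ℕ, IsRankingPattern m σ →
        ∃ N : Equiv.Perm (Fin m) → ℕ, QConcordant m N σ ∧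
          (∑ π : Equiv.Perm (Fin m), N π) = θ) →
      (Finset.Icc 2 m).lcm id ∣ θ) := by
  have part1 : ∀ σ : Finset (Fin m) → Fin m → ℕ, IsRankingPattern m σ →
      ∀ A : Finset (Fin m), 2 ≤ A.card → (∀ i ∈ A, σ A i = 1) →
      ∀ N : Equiv.Perm (Fin m) → ℕ, QConcordant m N σ →
        A.card ∣ ∑ π : Equiv.Perm (Fin m), N π := by
    intro σ hσ A hA hone N hN
    have hAne : A.Nonempty := Finset.card_pos.mp (by omega)
    obtain ⟨i₀, hi₀⟩ := hAne
    have hval : ∀ i ∈ A, votes m N A i = votes m N A i₀ := by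
      intro i hi
      by_cases h : i = i₀
      · rw [h]
      · exact ((hN A hA i hi i₀ hi₀ h).2).mp (by rw [hone i hi, hone i₀ hi₀])
    have : ∑ π : Equiv.Perm (Fin m), N π = A.card * votes m N A i₀ := by
      rw [← sum_votes m N A ⟨i₀, hi₀⟩, Finset.sum_congr rfl hval,
        Finset.sum_const, smul_eq_mul]
    rw [this]
    exact Dvd.intro _ rfl
  refine ⟨part1, fun θ hθ => ?_⟩
  apply Finset.lcm_dvd
  intro k hk
  rw [Finset.mem_Icc] at hk
  obtain ⟨N, hN, hsum⟩ := hθ (fun _ _ => 1) (by intro A hA i hi; simp)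
  obtain ⟨A, -, hAcard⟩ := Finset.exists_subset_card_eq
    (s := (Finset.univ : Finset (Fin m))) (n := k) (by simpa using hk.2)
  have := part1 (fun _ _ => 1) (by intro A hA i hi; simp [IsRankingFunction])
    A (by omega) (fun i _ => rfl) N hN
  rw [hsum, hAcard] at this
  simpa using this
end

section
/- If θ ∈ Θ_m (i.e., every ranking pattern over [m] admits a q-concordant voting situation with exactly θ voters), then θ + m! ∈ Θ_m. Consequently Θ_m, if nonempty, is infinite. -/
open Finset

lemma swap_mem {m : ℕ} {A : Finset (Fin m)} {i j k : Fin m} (hi : i ∈ A) (hj : j ∈ A)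
    (hk : k ∈ A) : Equiv.swap i j k ∈ A := by
  rcases eq_or_ne k i with rfl | h1
  · simpa [Equiv.swap_apply_left] using hj
  rcases eq_or_ne k j with rfl | h2
  · simpa [Equiv.swap_apply_right] using hi
  · simpa [Equiv.swap_apply_of_ne_of_ne h1 h2] using hk

lemma cnt_eq (m : ℕ) (A : Finset (Fin m)) {i j : Fin m} (hi : i ∈ A) (hj : j ∈ A) :
    (∑ π : Equiv.Perm (Fin m),
        (if ∀ k ∈ A, k ≠ i → π.symm i < π.symm k then 1 else 0) : ℕ) =
    ∑ π : Equiv.Perm (Fin m),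
        (if ∀ k ∈ A, k ≠ j → π.symm j < π.symm k then 1 else 0) := by
  refine Fintype.sum_equiv (Equiv.mulLeft (Equiv.swap i j)) _ _ ?_
  intro π
  have hsymm : ∀ k, ((Equiv.swap i j) * π).symm k = π.symm (Equiv.swap i j k) := by
    intro k; simp [Equiv.Perm.mul_def, Equiv.symm_trans_apply]
  refine if_congr ?_ rfl rfl
  constructor
  · intro h k hk hkj
    have hk' : Equiv.swap i j k ∈ A := swap_mem hi hj hk
    have hne : Equiv.swap i j k ≠ i := by
      intro he
      apply hkj
      have := (Equiv.swap i j).injective (a₁ := k) (a₂ := j)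
      exact this (by simpa [Equiv.swap_apply_right] using he)
    have := h _ hk' hne
    simpa [hsymm, Equiv.swap_apply_self, Equiv.swap_apply_right] using this
  · intro h k hk hki
    have hk' : Equiv.swap i j k ∈ A := swap_mem hi hj hk
    have hne : Equiv.swap i j k ≠ j := by
      intro he
      apply hki
      have := (Equiv.swap i j).injective (a₁ := k) (a₂ := i)
      exact this (by simpa [Equiv.swap_apply_left] using he)
    have := h _ hk' hne
    simpa [hsymm, Equiv.swap_apply_self, Equiv.swap_apply_right] using this

lemma votes_add_one (m : ℕ) (N : Equiv.Perm (Fin m) → ℕ) (A : Finset (Fin m)) (i : Fin m) :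
    votes m (fun π => N π + 1) A i =
      votes m N A i + ∑ π : Equiv.Perm (Fin m),
        (if ∀ j ∈ A, j ≠ i → π.symm i < π.symm j then 1 else 0) := by
  unfold votes
  rw [← Finset.sum_add_distrib]
  exact Finset.sum_congr rfl (fun π _ => by ring)

theorem stmt10 (m : ℕ) :
    (∀ θ : ℕ,
      (∀ σ : Finset (Fin m) → Fin m → ℕ, IsRankingPattern m σ →
        ∃ N : Equiv.Perm (Fin m) → ℕ, QConcordant m N σ ∧
          (∑ π : Equiv.Perm (Fin m), N π) = θ) →
      (∀ σ : Finset (Fin m) → Fin m → ℕ, IsRankingPattern m σ →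
        ∃ N : Equiv.Perm (Fin m) → ℕ, QConcordant m N σ ∧
          (∑ π : Equiv.Perm (Fin m), N π) = θ + m.factorial)) ∧
    ((∃ θ : ℕ,
        ∀ σ : Finset (Fin m) → Fin m → ℕ, IsRankingPattern m σ →
          ∃ N : Equiv.Perm (Fin m) → ℕ, QConcordant m N σ ∧
            (∑ π : Equiv.Perm (Fin m), N π) = θ) →
      {θ : ℕ | ∀ σ : Finset (Fin m) → Fin m → ℕ, IsRankingPattern m σ →
          ∃ N : Equiv.Perm (Fin m) → ℕ, QConcordant m N σ ∧
            (∑ π : Equiv.Perm (Fin m), N π) = θ}.Infinite) := by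
  have step : ∀ θ : ℕ,
      (∀ σ : Finset (Fin m) → Fin m → ℕ, IsRankingPattern m σ →
        ∃ N : Equiv.Perm (Fin m) → ℕ, QConcordant m N σ ∧
          (∑ π : Equiv.Perm (Fin m), N π) = θ) →
      (∀ σ : Finset (Fin m) → Fin m → ℕ, IsRankingPattern m σ →
        ∃ N : Equiv.Perm (Fin m) → ℕ, QConcordant m N σ ∧
          (∑ π : Equiv.Perm (Fin m), N π) = θ + m.factorial) := by
    intro θ h σ hσ
    obtain ⟨N, hN, hsum⟩ := h σ hσ
    refine ⟨fun π => N π + 1, ?_, ?_⟩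
    · intro A hA i hi j hj hij
      obtain ⟨h1, h2⟩ := hN A hA i hi j hj hij
      have vi := votes_add_one m N A i
      have vj := votes_add_one m N A j
      rw [cnt_eq m A hj hi] at vj
      constructor
      · rw [h1, vi, vj, Nat.add_lt_add_iff_right]
      · rw [h2, vi, vj, Nat.add_right_cancel_iff]
    · rw [Finset.sum_add_distrib, hsum, Finset.sum_const, Finset.card_univ,
        Fintype.card_perm, Fintype.card_fin, smul_eq_mul, mul_one]
  refine ⟨step, ?_⟩
  rintro ⟨θ, hθ⟩
  apply Set.infinite_of_injective_forall_mem
    (f := fun n : ℕ => θ + n * m.factorial)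
  · intro a b hab
    simp only [add_right_inj] at hab
    have : a * m.factorial = b * m.factorial := by omega
    exact Nat.eq_of_mul_eq_mul_right (Nat.factorial_pos m) this
  · intro n
    induction n with
    | zero => simpa using hθ
    | succ k ih =>
        have := step _ ih
        simpa [Nat.succ_mul, ← add_assoc] using this
end
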